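/- arXiv:2104.12970 — 2 statements merged into one kernel-verified Lean document; each statement's English description precedes it below -/
import Mathlib

section
/- Let R be a Noetherian local commutative ring, and let x be an element of the maximal ideal of R that is not nilpotent. Assume that the quotient of R by its nilradical is an integral domain, and that R/(x) is reduced. Then R is reduced. -/
theorem stmt_4 (R : Type*) [CommRing R] [IsNoetherianRing R] [IsLocalRing R]
    (x : R) (hx : x ∈ IsLocalRing.maximalIdeal R)
    (hnil : ¬ IsNilpotent x)
    (hdom : IsDomain (R ⧸ nilradical R))
    (hred : IsReduced (R ⧸ Ideal.span ({x} : Set R))) :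
    IsReduced R := by
  constructor
  intro f hf
  by_contra hf0
  -- Krull intersection
  have hI : Ideal.span ({x} : Set R) ≠ ⊤ := by
    intro h
    exact (IsLocalRing.maximalIdeal.isMaximal R).ne_top
      (top_le_iff.mp (h ▸ (Ideal.span_singleton_le_iff_mem _).mpr hx))
  have hbot := Ideal.iInf_pow_eq_bot_of_isLocalRing (Ideal.span ({x} : Set R)) hI
  have : ¬ ∀ n : ℕ, f ∈ (Ideal.span ({x} : Set R)) ^ n := by
    intro h
    apply hf0
    have : f ∈ (⊥ : Ideal R) := hbot ▸ Ideal.mem_iInf.mpr h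
    simpa using this
  -- find maximal n with f ∈ I^n
  obtain ⟨n, hn, hn1⟩ : ∃ n : ℕ, f ∈ (Ideal.span ({x} : Set R)) ^ n ∧
      f ∉ (Ideal.span ({x} : Set R)) ^ (n + 1) := by
    by_contra hc
    push_neg at hc
    apply this
    intro n
    induction n with
    | zero => simp
    | succ n ih => exact hc n ih
  rw [Ideal.span_singleton_pow, Ideal.mem_span_singleton] at hn
  obtain ⟨g, hg⟩ := hn
  have hgx : g ∉ Ideal.span ({x} : Set R) := by
    intro hgmem
    rw [Ideal.mem_span_singleton] at hgmem
    obtain ⟨c, hc⟩ := hgmem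
    apply hn1
    rw [Ideal.span_singleton_pow, Ideal.mem_span_singleton]
    exact ⟨c, by rw [hg, hc, pow_succ]; ring⟩
  -- g is nilpotent: work in R/nilradical
  have hgn : IsNilpotent g := by
    have hfmem : f ∈ nilradical R := hf
    have h0 : (Ideal.Quotient.mk (nilradical R)) f = 0 := Ideal.Quotient.eq_zero_iff_mem.mpr hfmem
    rw [hg, map_mul, map_pow] at h0
    have hx0 : (Ideal.Quotient.mk (nilradical R)) x ≠ 0 := by
      intro h
      exact hnil (Ideal.Quotient.eq_zero_iff_mem.mp h)
    have := mul_eq_zero.mp h0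
    refine this.elim (fun h => ?_) (fun h => ?_)
    exact absurd (pow_eq_zero_iff'.mp h).1 hx0
    exact (Ideal.Quotient.eq_zero_iff_mem.mp h : g ∈ nilradical R)
  -- then g mod (x) is nilpotent, hence zero by reducedness, contradiction
  apply hgx
  have : IsNilpotent ((Ideal.Quotient.mk (Ideal.span ({x} : Set R))) g) := hgn.map _
  have := hred.eq_zero _ ⟨this.choose, this.choose_spec⟩
  exact Ideal.Quotient.eq_zero_iff_mem.mp this
end

section
/- Let f : {z : ℂ // z ≠ 0 ∧ z ≠ -1} → {z : ℂ // z ≠ 0} be the map sending z to z². Then f is continuous and surjective, every fiber of f is finite (hence compact), but f is not a proper map (there exists a compact subset of the target whose preimage is not compact). -/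
/-!
Squaring is continuous, and onto `ℂˣ` even after removing `-1`, because `1` is a second
square root of `(-1)² = 1`; its fibres lie in the two square roots of a point. It is not
proper: the unit circle is compact, but its preimage is the circle punctured at `-1`, which
is not closed in `ℂ` because the circle is connected.
-/

open Metric

theorem exists_sq_eq_and_ne {K : Type*} [Field K] [IsAlgClosed K] [NeZero (2 : K)] {y : K}
    (hy : y ≠ 0) (a : K) : ∃ w, w ^ 2 = y ∧ w ≠ a := by
  obtain ⟨w, hw⟩ := IsAlgClosed.exists_pow_nat_eq y two_pos
  by_cases hwa : w = a
  · refine ⟨-w, by rw [neg_sq, hw], fun hna => hy ?_⟩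
    have hw0 : w = 0 := by
      have : (2 : K) * w = 0 := by linear_combination hwa - hna
      exact (mul_eq_zero.1 this).resolve_left two_ne_zero
    rw [← hw, hw0, zero_pow two_ne_zero]
  · exact ⟨w, hw, hwa⟩

theorem Set.finite_setOf_pow_eq {R : Type*} [CommRing R] [IsDomain R] {n : ℕ} (hn : 0 < n)
    (a : R) : {x : R | x ^ n = a}.Finite := by
  classical
  exact (Polynomial.nthRoots n a).toFinset.finite_toSet.subset fun x hx => by
    simpa [Polynomial.mem_nthRoots hn] using hx

theorem IsPreconnected.not_isCompact_diff_singleton {X : Type*} [TopologicalSpace X] [T2Space X]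
    {s : Set X} (hs : IsPreconnected s) {x : X} (hx : x ∈ s) (hne : (s \ {x}).Nonempty) :
    ¬ IsCompact (s \ {x}) := fun hc => by
  obtain ⟨y, -, hy, rfl⟩ := isPreconnected_closed_iff.1 hs _ _ hc.isClosed isClosed_singleton
    (fun y hy => by by_cases h : y = x <;> simp [h, hy]) (by rwa [Set.inter_eq_right.2 Set.sdiff_subset]) ⟨x, hx, rfl⟩
  exact hy.2 rfl

theorem Subtype.isCompact_preimage_val {X : Type*} [TopologicalSpace X] {p : X → Prop}
    {s : Set X} (hs : IsCompact s) (hsp : ∀ x ∈ s, p x) :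
    IsCompact (Subtype.val ⁻¹' s : Set {x // p x}) := by
  rwa [Subtype.isCompact_iff, Set.image_preimage_eq_of_subset fun x hx => ⟨⟨x, hsp x hx⟩, rfl⟩]

theorem Complex.not_isCompact_sphere_diff_neg_one : ¬ IsCompact (sphere (0 : ℂ) 1 \ {-1}) :=
  (isConnected_sphere (by simp [Complex.rank_real_complex]) 0 zero_le_one).isPreconnected
    |>.not_isCompact_diff_singleton (by simp) ⟨1, by simp, by norm_num⟩

theorem image_preimage_unit_sphere_of_val_eq_sq
    {f : {z : ℂ // z ≠ 0 ∧ z ≠ -1} → {z : ℂ // z ≠ 0}} (hf : ∀ z, (f z : ℂ) = (z : ℂ) ^ 2) :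
    Subtype.val '' (f ⁻¹' (Subtype.val ⁻¹' sphere (0 : ℂ) 1)) = sphere (0 : ℂ) 1 \ {-1} := by
  ext z
  simp only [Set.mem_image, Set.mem_preimage, hf, mem_sphere_zero_iff_norm, norm_pow,
    pow_eq_one_iff_of_nonneg (norm_nonneg _) two_ne_zero, Subtype.exists, exists_and_right,
    exists_eq_right, Set.mem_sdiff, Set.mem_singleton_iff]
  exact ⟨fun ⟨⟨_, h⟩, hz⟩ => ⟨hz, h⟩, fun ⟨hz, h⟩ => ⟨⟨norm_ne_zero_iff.1 (by simp [hz]), h⟩, hz⟩⟩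

theorem stmt_8 (f : {z : ℂ // z ≠ 0 ∧ z ≠ -1} → {z : ℂ // z ≠ 0})
    (hf : ∀ z, (f z : ℂ) = (z : ℂ) ^ 2) :
    Continuous f ∧ Function.Surjective f ∧
    (∀ y, (f ⁻¹' {y}).Finite) ∧ ¬ IsProperMap f := by
  have hf' : Subtype.val ∘ f = (· ^ 2) ∘ Subtype.val := funext hf
  refine ⟨continuous_induced_rng.2 (hf' ▸ by fun_prop), fun ⟨y, hy⟩ => ?_, fun y => ?_,
    fun hprop => ?_⟩
  · obtain ⟨w, hw, hw1⟩ := exists_sq_eq_and_ne hy (-1)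
    exact ⟨⟨w, fun h => hy (by simp [← hw, h]), hw1⟩, Subtype.ext (by rw [hf, hw])⟩
  · refine ((Set.finite_setOf_pow_eq two_pos (y : ℂ)).preimage Subtype.val_injective.injOn).subset
      fun z hz => ?_
    rw [Set.mem_preimage, Set.mem_singleton_iff] at hz
    simp [← hf, hz]
  · have hK : IsCompact (Subtype.val ⁻¹' sphere (0 : ℂ) 1 : Set {z : ℂ // z ≠ 0}) :=
      Subtype.isCompact_preimage_val (isCompact_sphere 0 1) fun z hz =>
        ne_zero_of_mem_unit_sphere ⟨z, hz⟩
    refine Complex.not_isCompact_sphere_diff_neg_one ?_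
    rw [← image_preimage_unit_sphere_of_val_eq_sq hf]
    exact (hprop.isCompact_preimage hK).image continuous_subtype_val
end
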